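/- Let R be a ring, M an R-module, and e ∈ M. The direct limit of the modules Sym^{≤n}(M)/(1−e)Sym^{≤n−1}(M) under the natural maps (induced by multiplication by e) is isomorphic to Sym(M)/(1−e)Sym(M). -/

import Mathlib

open TensorProduct

variable (R M : Type*) [CommRing R] [AddCommGroup M] [Module R M]

/-- The commutativity relation on the tensor algebra. -/
inductive SymAlgRel : TensorAlgebra R M → TensorAlgebra R M → Prop
  | comm (m n : M) : SymAlgRel (TensorAlgebra.ι R m * TensorAlgebra.ι R n)
      (TensorAlgebra.ι R n * TensorAlgebra.ι R m)

/-- The symmetric algebra `Sym(M)`. -/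
abbrev SymmAlg := RingQuot (SymAlgRel R M)

instance : AddCommGroup (SymmAlg R M) :=
  { (inferInstance : AddCommMonoid (SymmAlg R M)),
    (Ring.toAddCommGroup : AddCommGroup (SymmAlg R M)) with }

/-- The canonical inclusion `M → Sym(M)`. -/
noncomputable def symι : M →ₗ[R] SymmAlg R M :=
  (RingQuot.mkAlgHom R (SymAlgRel R M)).toLinearMap ∘ₗ TensorAlgebra.ι R

/-- The degree-one part of `Sym(M)`. -/
noncomputable def symV : Submodule R (SymmAlg R M) :=
  Submodule.span R (Set.range (symι R M))

/-- The truncation `Sym^{≤ n}(M)`. -/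
noncomputable def symLE (n : ℕ) : Submodule R (SymmAlg R M) :=
  (1 ⊔ symV R M) ^ n

/-- The submodule `(1 - e)·Sym(M)`. -/
noncomputable def symW (e : M) : Submodule R (SymmAlg R M) :=
  Submodule.map (LinearMap.mulLeft R ((1 : SymmAlg R M) - symι R M e)) ⊤

/-- The quotient `Sym^{≤ n}(M) / (1 - e)·Sym^{≤ n-1}(M)`. -/
noncomputable abbrev symQuot (e : M) (n : ℕ) :=
  ↥(symLE R M n) ⧸
    (Submodule.comap (symLE R M n).subtype
      (Submodule.map (LinearMap.mulLeft R ((1 : SymmAlg R M) - symι R M e))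
        (symLE R M (n - 1))))

/-- The natural map `Sym^{≤ n}(M)/(1-e)Sym^{≤ n-1}(M) → Sym(M)/(1-e)Sym(M)`. -/
noncomputable def symπ (e : M) (n : ℕ) :
    symQuot R M e n →ₗ[R] (SymmAlg R M ⧸ symW R M e) :=
  Submodule.liftQ _ ((symW R M e).mkQ ∘ₗ (symLE R M n).subtype) (by
    intro x hx
    simp only [LinearMap.mem_ker, LinearMap.comp_apply, Submodule.mkQ_apply,
      Submodule.Quotient.mk_eq_zero]
    exact Submodule.map_mono le_top hx)

/-!
The maps `Sym^{≤n}/(1-e)Sym^{≤n-1} → Sym/(1-e)Sym` are compatible because `e ^ t x ≡ x` modulo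
`1 - e`, and jointly surjective because the filtration `Sym^{≤n}` is exhaustive. For injectivity in
the limit, let `x = (1 - e) y ∈ Sym^{≤n}`. Comparing homogeneous components (through the grading
`Sym(M) → Sym(M)[X]`) gives `y_{d+1} = e y_d` for `d ≥ n`; hence for large `K` all components of
`e ^ K y` of degree `≥ n + K` vanish, so `e ^ K x = (1 - e) e ^ K y` with `e ^ K y ∈ Sym^{≤n+K-1}`,
and `x` dies at stage `n + K`.
-/

open Polynomial

namespace Module.DirectLimit

variable {A ι : Type*} [Preorder ι] [DecidableEq ι] {G : ι → Type*} {P : Type*}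

theorem lift_surjective_of_forall_exists [Semiring A] [∀ i, AddCommMonoid (G i)]
    [∀ i, Module A (G i)] {f : ∀ i j, i ≤ j → G i →ₗ[A] G j} [AddCommMonoid P] [Module A P]
    {g : ∀ i, G i →ₗ[A] P} {Hg : ∀ i j hij x, g j (f i j hij x) = g i x}
    (H : ∀ y, ∃ i x, g i x = y) : Function.Surjective (lift A ι G f g Hg) := by
  intro y
  obtain ⟨i, x, rfl⟩ := H y
  exact ⟨of A ι G f i x, lift_of g Hg x⟩

theorem lift_injective_of_exists_f_eq_zero [Ring A] [∀ i, AddCommGroup (G i)]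
    [∀ i, Module A (G i)] {f : ∀ i j, i ≤ j → G i →ₗ[A] G j} [AddCommGroup P] [Module A P]
    {g : ∀ i, G i →ₗ[A] P} {Hg : ∀ i j hij x, g j (f i j hij x) = g i x}
    [Nonempty ι] [IsDirectedOrder ι] (H : ∀ i x, g i x = 0 → ∃ j, ∃ hij : i ≤ j, f i j hij x = 0) :
    Function.Injective (lift A ι G f g Hg) := by
  rw [injective_iff_map_eq_zero]
  intro z hz
  obtain ⟨i, x, rfl⟩ := exists_of z
  rw [lift_of] at hz
  obtain ⟨j, hij, hx⟩ := H i x hz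
  rw [← of_f (hij := hij), hx, map_zero]

end Module.DirectLimit

theorem SymmAlg.induction {P : SymmAlg R M → Prop}
    (algebraMap : ∀ r, P (algebraMap R (SymmAlg R M) r)) (symι : ∀ m, P (symι R M m))
    (mul : ∀ a b, P a → P b → P (a * b)) (add : ∀ a b, P a → P b → P (a + b))
    (z : SymmAlg R M) : P z := by
  obtain ⟨t, rfl⟩ := RingQuot.mkAlgHom_surjective R (SymAlgRel R M) z
  induction t using TensorAlgebra.induction with
  | algebraMap r => rw [AlgHom.commutes]; exact algebraMap r
  | ι m => exact symι m
  | mul a b ha hb => rw [map_mul]; exact mul _ _ ha hb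
  | add a b ha hb => rw [map_add]; exact add _ _ ha hb

theorem symι_mul_comm (m n : M) : symι R M m * symι R M n = symι R M n * symι R M m := by
  have h := RingQuot.mkAlgHom_rel R (SymAlgRel.comm (R := R) m n)
  rw [map_mul, map_mul] at h
  exact h

theorem mul_mem_symLE {a b : ℕ} {x y : SymmAlg R M} (hx : x ∈ symLE R M a)
    (hy : y ∈ symLE R M b) : x * y ∈ symLE R M (a + b) := by
  rw [symLE, pow_add]
  exact Submodule.mul_mem_mul hx hy

theorem symLE_mono : Monotone (symLE R M) :=
  fun _ _ h => pow_le_pow_right' le_sup_left h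

theorem symV_pow_le_symLE (k : ℕ) : symV R M ^ k ≤ symLE R M k :=
  pow_le_pow_left' le_sup_right k

theorem symι_pow_mem_symLE (e : M) (t : ℕ) : symι R M e ^ t ∈ symLE R M t :=
  Submodule.pow_mem_pow (1 ⊔ symV R M)
    (Submodule.mem_sup_right (Submodule.subset_span ⟨e, rfl⟩)) t

theorem pow_mul_mem_symLE (e : M) {i j : ℕ} (hij : i ≤ j) {x : SymmAlg R M}
    (hx : x ∈ symLE R M i) : symι R M e ^ (j - i) * x ∈ symLE R M j := by
  have h := mul_mem_symLE R M (symι_pow_mem_symLE R M e (j - i)) hx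
  rwa [Nat.sub_add_cancel hij] at h

/-- The grading of `Sym(M)`: `z ↦ ∑ₖ zₖ Xᵏ`, where `zₖ` is the degree-`k` component of `z`. -/
noncomputable def symGrading : SymmAlg R M →ₐ[R] Polynomial (SymmAlg R M) :=
  RingQuot.liftAlgHom R ⟨TensorAlgebra.lift R
      ((monomial 1).restrictScalars R ∘ₗ symι R M), by
    rintro _ _ ⟨m, n⟩
    simp only [map_mul, TensorAlgebra.lift_ι_apply, LinearMap.comp_apply,
      LinearMap.restrictScalars_apply, monomial_mul_monomial, symι_mul_comm]⟩

theorem symGrading_symι (m : M) : symGrading R M (symι R M m) = monomial 1 (symι R M m) := by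
  simp [symGrading, symι]

theorem eval_one_symGrading (z : SymmAlg R M) : (symGrading R M z).eval 1 = z := by
  induction z using SymmAlg.induction with
  | algebraMap r => rw [AlgHom.commutes, Polynomial.algebraMap_apply, eval_C]
  | symι m => rw [symGrading_symι, eval_monomial, one_pow, mul_one]
  | mul a b ha hb =>
    rw [map_mul, eval, eval₂_mul_noncomm _ _ fun _ => Commute.one_right _, ← eval, ← eval,
      ha, hb]
  | add a b ha hb => rw [map_add, eval_add, ha, hb]

theorem coeff_symGrading_mem (z : SymmAlg R M) (k : ℕ) :
    (symGrading R M z).coeff k ∈ symV R M ^ k := by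
  induction z using SymmAlg.induction generalizing k with
  | algebraMap r =>
    rw [AlgHom.commutes, Polynomial.algebraMap_apply, coeff_C]
    split_ifs with hk
    · subst hk; exact Submodule.algebraMap_mem r
    · exact zero_mem _
  | symι m =>
    rw [symGrading_symι, coeff_monomial]
    split_ifs with hk
    · subst hk; rw [pow_one]; exact Submodule.subset_span ⟨m, rfl⟩
    · exact zero_mem _
  | mul a b ha hb =>
    rw [map_mul, coeff_mul]
    refine Submodule.sum_mem _ fun ⟨i, j⟩ hij => ?_
    rw [← Finset.HasAntidiagonal.mem_antidiagonal.mp hij, pow_add]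
    exact Submodule.mul_mem_mul (ha i) (hb j)
  | add a b ha hb => rw [map_add, coeff_add]; exact add_mem (ha k) (hb k)

theorem natDegree_symGrading_le_one {m : SymmAlg R M} (hm : m ∈ 1 ⊔ symV R M) :
    (symGrading R M m).natDegree ≤ 1 := by
  obtain ⟨a, ha, v, hv, rfl⟩ := Submodule.mem_sup.mp hm
  obtain ⟨r, rfl⟩ := Submodule.mem_one.mp ha
  clear hm
  rw [map_add, AlgHom.commutes, Polynomial.algebraMap_apply]
  refine natDegree_add_le_of_degree_le (by rw [natDegree_C]; exact zero_le_one) ?_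
  induction hv using Submodule.span_induction with
  | mem x hx => obtain ⟨m, rfl⟩ := hx; rw [symGrading_symι]; exact natDegree_monomial_le _
  | zero => rw [map_zero, natDegree_zero]; exact zero_le_one
  | add x y _ _ hx hy => rw [map_add]; exact natDegree_add_le_of_degree_le hx hy
  | smul r x _ hx => rw [map_smul]; exact (natDegree_smul_le _ _).trans hx

theorem natDegree_symGrading_le {n : ℕ} {z : SymmAlg R M} (hz : z ∈ symLE R M n) :
    (symGrading R M z).natDegree ≤ n := by
  induction hz using Submodule.pow_induction_on_left' with
  | algebraMap r => rw [AlgHom.commutes, Polynomial.algebraMap_apply, natDegree_C]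
  | add x y i _ _ hx hy => rw [map_add]; exact natDegree_add_le_of_degree_le hx hy
  | mem_mul m hm i x _ hx =>
    rw [map_mul, Nat.succ_eq_one_add]
    exact natDegree_mul_le_of_le (natDegree_symGrading_le_one R M hm) hx

theorem sum_range_coeff_symGrading (z : SymmAlg R M) {N : ℕ}
    (hN : (symGrading R M z).natDegree < N) :
    ∑ k ∈ Finset.range N, (symGrading R M z).coeff k = z := by
  conv_rhs => rw [← eval_one_symGrading R M z, eval_eq_sum_range' hN]
  simp only [one_pow, mul_one]

theorem exists_mem_symLE (z : SymmAlg R M) : ∃ n, z ∈ symLE R M n := by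
  set n := (symGrading R M z).natDegree
  refine ⟨n, ?_⟩
  rw [← sum_range_coeff_symGrading R M z (Nat.lt_succ_self n)]
  refine Submodule.sum_mem _ fun k hk => ?_
  exact symLE_mono R M (Nat.lt_succ_iff.mp (Finset.mem_range.mp hk))
    (symV_pow_le_symLE R M k (coeff_symGrading_mem R M z k))

theorem coeff_one_sub_monomial_mul {A : Type*} [Ring A] (a : A) (p : Polynomial A) (d : ℕ) :
    ((1 - monomial 1 a) * p).coeff (d + 1) = p.coeff (d + 1) - a * p.coeff d := by
  rw [sub_mul, one_mul, coeff_sub, coeff_monomial_mul]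

theorem exists_pow_mul_mem_symLE (e : M) {n : ℕ} {y : SymmAlg R M}
    (hy : (1 - symι R M e) * y ∈ symLE R M n) :
    ∃ K, symι R M e ^ K * y ∈ symLE R M (n + K - 1) := by
  set ε := symι R M e
  set p := symGrading R M y
  have hstep : ∀ d, n ≤ d → p.coeff (d + 1) = ε * p.coeff d := by
    intro d hd
    have h := coeff_eq_zero_of_natDegree_lt
      ((natDegree_symGrading_le R M hy).trans_lt (Nat.lt_succ_of_le hd))
    rw [map_mul, map_sub, map_one, symGrading_symι, coeff_one_sub_monomial_mul] at h
    exact sub_eq_zero.mp h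
  have hshift : ∀ d, n ≤ d → ∀ t, p.coeff (d + t) = ε ^ t * p.coeff d := by
    intro d hd t
    induction t with
    | zero => rw [add_zero, pow_zero, one_mul]
    | succ t ih => rw [← add_assoc, hstep _ (by omega), ih, ← mul_assoc, ← pow_succ']
  set K := p.natDegree + 1
  refine ⟨K, ?_⟩
  rw [← sum_range_coeff_symGrading R M y (N := n + K) (by simp only [K, p]; omega),
    Finset.mul_sum]
  refine Submodule.sum_mem _ fun k _ => ?_
  by_cases hk : k < n
  · exact symLE_mono R M (by omega)
      (mul_mem_symLE R M (symι_pow_mem_symLE R M e K)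
        (symV_pow_le_symLE R M k (coeff_symGrading_mem R M y k)))
  · rw [← hshift k (by omega) K, coeff_eq_zero_of_natDegree_lt (by omega)]
    exact zero_mem _

theorem sub_pow_mul_mem_symW (e : M) (t : ℕ) (x : SymmAlg R M) :
    x - symι R M e ^ t * x ∈ symW R M e :=
  ⟨(∑ k ∈ Finset.range t, symι R M e ^ k) * x, trivial, by
    rw [LinearMap.mulLeft_apply, ← mul_assoc, mul_neg_geom_sum, sub_mul, one_mul]⟩

theorem symπ_mk_pow_mul (e : M) {i j : ℕ} (hij : i ≤ j) {x : SymmAlg R M}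
    (hx : x ∈ symLE R M i) :
    symπ R M e j
        (Submodule.Quotient.mk ⟨symι R M e ^ (j - i) * x, pow_mul_mem_symLE R M e hij hx⟩) =
      symπ R M e i (Submodule.Quotient.mk ⟨x, hx⟩) :=
  ((Submodule.Quotient.eq _).mpr (sub_pow_mul_mem_symW R M e (j - i) x)).symm

theorem exists_mk_pow_mul_eq_zero (e : M) {i : ℕ} {x : SymmAlg R M} (hx : x ∈ symLE R M i)
    (h : symπ R M e i (Submodule.Quotient.mk ⟨x, hx⟩) = 0) :
    ∃ j, ∃ hij : i ≤ j, (Submodule.Quotient.mk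
      ⟨symι R M e ^ (j - i) * x, pow_mul_mem_symLE R M e hij hx⟩ : symQuot R M e j) = 0 := by
  obtain ⟨y, -, rfl⟩ := (Submodule.Quotient.mk_eq_zero _).mp h
  obtain ⟨K, hK⟩ := exists_pow_mul_mem_symLE R M e hx
  refine ⟨i + K, Nat.le_add_right i K, (Submodule.Quotient.mk_eq_zero _).mpr ⟨_, hK, ?_⟩⟩
  simp only [LinearMap.mulLeft_apply, Submodule.subtype_apply, Nat.add_sub_cancel_left]
  rw [← mul_assoc, ← mul_assoc, mul_sub, sub_mul, mul_one, one_mul, ← pow_succ, ← pow_succ']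

/-- the direct limit of the modules `Sym^{≤n}(M)/(1-e)Sym^{≤n-1}(M)`,
under the natural maps induced by multiplication by `e`, is isomorphic to
`Sym(M)/(1-e)Sym(M)`, compatibly with the natural maps to the latter. -/
theorem stmt6 (e : M)
    (f : ∀ i j : ℕ, i ≤ j → symQuot R M e i →ₗ[R] symQuot R M e j)
    (hf : ∀ (i j : ℕ) (h : i ≤ j) (x : SymmAlg R M) (hx : x ∈ symLE R M i)
      (hx' : symι R M e ^ (j - i) * x ∈ symLE R M j),
      f i j h (Submodule.Quotient.mk ⟨x, hx⟩) =
        Submodule.Quotient.mk ⟨symι R M e ^ (j - i) * x, hx'⟩) :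
    ∃ L : Module.DirectLimit (symQuot R M e) f ≃ₗ[R] (SymmAlg R M ⧸ symW R M e),
      ∀ (i : ℕ) (x : symQuot R M e i),
        L (Module.DirectLimit.of R ℕ (symQuot R M e) f i x) = symπ R M e i x := by
  have compat : ∀ i j hij x, symπ R M e j (f i j hij x) = symπ R M e i x := by
    rintro i j hij ⟨⟨x, hx⟩⟩
    rw [Submodule.Quotient.quot_mk_eq_mk, hf i j hij x hx (pow_mul_mem_symLE R M e hij hx)]
    exact symπ_mk_pow_mul R M e hij hx
  refine ⟨.ofBijective (Module.DirectLimit.lift R ℕ _ f _ compat) ⟨?_, ?_⟩,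
    fun i x => Module.DirectLimit.lift_of _ compat x⟩
  · refine Module.DirectLimit.lift_injective_of_exists_f_eq_zero (G := symQuot R M e)
      fun i x h => ?_
    obtain ⟨⟨x, hx⟩, rfl⟩ := Submodule.Quotient.mk_surjective _ x
    obtain ⟨j, hij, hzero⟩ := exists_mk_pow_mul_eq_zero R M e hx h
    exact ⟨j, hij, by rw [hf i j hij x hx (pow_mul_mem_symLE R M e hij hx)]; exact hzero⟩
  · refine Module.DirectLimit.lift_surjective_of_forall_exists (G := symQuot R M e) fun w => ?_
    obtain ⟨z, rfl⟩ := Submodule.mkQ_surjective _ w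
    obtain ⟨n, hz⟩ := exists_mem_symLE R M z
    exact ⟨n, Submodule.Quotient.mk ⟨z, hz⟩, rfl⟩
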